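/- For every word f over {1,…,m}, the set PD_f = {x ∈ ℂ^d : t_f(x x†) = 0} is a linear subspace of ℂ^d. -/

import Mathlib

noncomputable section
open Matrix
open scoped ComplexOrder

variable {d m r : ℕ}

/-- One step of process `i`: `T_i(ρ) = E_i(M₁ ρ M₁†) = ∑_j (E_{i,j} M₁) ρ (E_{i,j} M₁)†`. -/
def Tstep (E : Fin m → Fin r → Matrix (Fin d) (Fin d) ℂ)
    (M1 : Matrix (Fin d) (Fin d) ℂ) (i : Fin m)
    (ρ : Matrix (Fin d) (Fin d) ℂ) : Matrix (Fin d) (Fin d) ℂ :=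
  ∑ j, (E i j * M1) * ρ * (E i j * M1)ᴴ

/-- `T_f` for a word `f = s₁⋯s_n`: apply `T_{s₁}` first, then `T_{s₂}`, …, `T_{s_n}`. -/
def Tword (E : Fin m → Fin r → Matrix (Fin d) (Fin d) ℂ)
    (M1 : Matrix (Fin d) (Fin d) ℂ) (f : List (Fin m))
    (ρ : Matrix (Fin d) (Fin d) ℂ) : Matrix (Fin d) (Fin d) ℂ :=
  f.foldl (fun σ k => Tstep E M1 k σ) ρ

/-- The support of a matrix: its column space, as a subspace of `ℂ^d`. -/
def supp (A : Matrix (Fin d) (Fin d) ℂ) : Submodule ℂ (Fin d → ℂ) :=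
  LinearMap.range (Matrix.toLin' A)

/-- Length-`n` prefix of a schedule. -/
def prefixn (s : ℕ → Fin m) (n : ℕ) : List (Fin m) :=
  List.ofFn (fun i : Fin n => s i)

/-- Termination probability within a word `f`. -/
def tWord (E : Fin m → Fin r → Matrix (Fin d) (Fin d) ℂ)
    (M0 M1 : Matrix (Fin d) (Fin d) ℂ) (f : List (Fin m))
    (ρ : Matrix (Fin d) (Fin d) ℂ) : ℝ :=
  ∑ n ∈ Finset.range (f.length + 1),
    (M0 * Tword E M1 (f.take n) ρ * M0ᴴ).trace.re

/-- Termination probability along a schedule `s`. -/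
def tSched (E : Fin m → Fin r → Matrix (Fin d) (Fin d) ℂ)
    (M0 M1 : Matrix (Fin d) (Fin d) ℂ) (s : ℕ → Fin m)
    (ρ : Matrix (Fin d) (Fin d) ℂ) : ℝ :=
  ∑' n : ℕ, (M0 * Tword E M1 (prefixn s n) ρ * M0ᴴ).trace.re

/-- Termination probability `t(ρ)`: infimum over all schedules. -/
def tInf (E : Fin m → Fin r → Matrix (Fin d) (Fin d) ℂ)
    (M0 M1 : Matrix (Fin d) (Fin d) ℂ)
    (ρ : Matrix (Fin d) (Fin d) ℂ) : ℝ :=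
  ⨅ s : ℕ → Fin m, tSched E M0 M1 s ρ

/-- The reachable space `H_{R(ρ)}`. -/
def HR (E : Fin m → Fin r → Matrix (Fin d) (Fin d) ℂ)
    (M1 : Matrix (Fin d) (Fin d) ℂ)
    (ρ : Matrix (Fin d) (Fin d) ℂ) : Submodule ℂ (Fin d → ℂ) :=
  ⨆ f : List (Fin m), supp (Tword E M1 f ρ)

/-- The average super-operator `T = (1/m) ∑ T_i`. -/
def Tavg (E : Fin m → Fin r → Matrix (Fin d) (Fin d) ℂ)
    (M1 : Matrix (Fin d) (Fin d) ℂ)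
    (ρ : Matrix (Fin d) (Fin d) ℂ) : Matrix (Fin d) (Fin d) ℂ :=
  ((m : ℂ)⁻¹) • ∑ i : Fin m, Tstep E M1 i ρ

/-- `H_{R̄_n(ρ)} = ⋁_{k=0}^n supp(T^k(ρ))`. -/
def HRbar (E : Fin m → Fin r → Matrix (Fin d) (Fin d) ℂ)
    (M1 : Matrix (Fin d) (Fin d) ℂ)
    (ρ : Matrix (Fin d) (Fin d) ℂ) (n : ℕ) : Submodule ℂ (Fin d → ℂ) :=
  ⨆ k : Fin (n + 1), supp ((Tavg E M1)^[k] ρ)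

/-- Reachable termination probability `h(ρ)`. -/
def hProb (E : Fin m → Fin r → Matrix (Fin d) (Fin d) ℂ)
    (M0 M1 : Matrix (Fin d) (Fin d) ℂ)
    (ρ : Matrix (Fin d) (Fin d) ℂ) : ℝ :=
  sInf { x : ℝ | ∃ σ : Matrix (Fin d) (Fin d) ℂ,
    σ.PosSemidef ∧ σ.trace = 1 ∧ supp σ ≤ HR E M1 ρ ∧ x = tInf E M0 M1 σ }

/-- `PD_f`: pure states diverging within the word `f`. -/
def PDword (E : Fin m → Fin r → Matrix (Fin d) (Fin d) ℂ)
    (M0 M1 : Matrix (Fin d) (Fin d) ℂ) (f : List (Fin m)) : Set (Fin d → ℂ) :=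
  { x : Fin d → ℂ | tWord E M0 M1 f (Matrix.vecMulVec x (star x)) = 0 }

/-- `PD_n`: union of `PD_f` over words of length `n`. -/
def PDn (E : Fin m → Fin r → Matrix (Fin d) (Fin d) ℂ)
    (M0 M1 : Matrix (Fin d) (Fin d) ℂ) (n : ℕ) : Set (Fin d → ℂ) :=
  { x : Fin d → ℂ | ∃ f : List (Fin m), f.length = n ∧ x ∈ PDword E M0 M1 f }

/-- `PD`: the diverging pure states. -/
def PD (E : Fin m → Fin r → Matrix (Fin d) (Fin d) ℂ)
    (M0 M1 : Matrix (Fin d) (Fin d) ℂ) : Set (Fin d → ℂ) :=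
  { x : Fin d → ℂ | ∃ s : ℕ → Fin m, tSched E M0 M1 s (Matrix.vecMulVec x (star x)) = 0 }

/-! Each `T_i` is in Kraus form, so every `T_f` maps positive semidefinite matrices to positive
semidefinite ones, and `ρ ↦ t_f(ρ)` is a real-linear functional that is nonnegative on states. For
any such functional `φ`, the map `x ↦ φ (x x†)` is a positive semidefinite quadratic form, and the
zero set of such a form is a subspace. -/

section NullSubmodule

variable {n : Type*}

lemma vecMulVec_star_add_add_vecMulVec_star_sub (x y : n → ℂ) :
    vecMulVec (x + y) (star (x + y)) + vecMulVec (x - y) (star (x - y)) =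
      (2 : ℝ) • (vecMulVec x (star x) + vecMulVec y (star y)) := by
  ext i j
  simp only [Matrix.add_apply, Matrix.smul_apply, vecMulVec_apply, Pi.add_apply, Pi.sub_apply,
    Pi.star_apply, star_add, star_sub, Complex.real_smul]
  push_cast
  ring

lemma vecMulVec_star_smul (c : ℂ) (x : n → ℂ) :
    vecMulVec (c • x) (star (c • x)) = Complex.normSq c • vecMulVec x (star x) := by
  ext i j
  simp only [Matrix.smul_apply, vecMulVec_apply, Pi.smul_apply, Pi.star_apply, star_smul,
    smul_eq_mul, Complex.real_smul, ← Complex.mul_conj, Complex.star_def]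
  ring

def rankOneNullSubmodule (φ : Matrix n n ℂ →ₗ[ℝ] ℝ) (hφ : ∀ x, 0 ≤ φ (vecMulVec x (star x))) :
    Submodule ℂ (n → ℂ) where
  carrier := {x | φ (vecMulVec x (star x)) = 0}
  zero_mem' := by simp
  add_mem' {x y} hx hy := by
    -- parallelogram law: `q (x + y) ≤ q (x + y) + q (x - y) = 2 q x + 2 q y` for `q x = φ (x x†)`
    have hsum := congrArg φ (vecMulVec_star_add_add_vecMulVec_star_sub x y)
    simp only [map_add, map_smul, smul_eq_mul] at hsum
    change φ _ = 0 at hx hy ⊢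
    linarith [hφ (x + y), hφ (x - y)]
  smul_mem' c x hx := by
    change φ _ = 0 at hx ⊢
    rw [vecMulVec_star_smul, map_smul, hx, smul_zero]

end NullSubmodule

section Kraus

variable (E : Fin m → Fin r → Matrix (Fin d) (Fin d) ℂ) (M0 M1 : Matrix (Fin d) (Fin d) ℂ)

lemma Tstep_add (i : Fin m) (ρ σ : Matrix (Fin d) (Fin d) ℂ) :
    Tstep E M1 i (ρ + σ) = Tstep E M1 i ρ + Tstep E M1 i σ := by
  simp only [Tstep, Matrix.mul_add, Matrix.add_mul, Finset.sum_add_distrib]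

lemma Tstep_smul (i : Fin m) (c : ℂ) (ρ : Matrix (Fin d) (Fin d) ℂ) :
    Tstep E M1 i (c • ρ) = c • Tstep E M1 i ρ := by
  simp only [Tstep, Matrix.mul_smul, Matrix.smul_mul, Finset.smul_sum]

lemma Tstep_posSemidef (i : Fin m) {ρ : Matrix (Fin d) (Fin d) ℂ} (hρ : ρ.PosSemidef) :
    (Tstep E M1 i ρ).PosSemidef :=
  posSemidef_sum _ fun _ _ => hρ.mul_mul_conjTranspose_same _

lemma Tword_add (f : List (Fin m)) (ρ σ : Matrix (Fin d) (Fin d) ℂ) :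
    Tword E M1 f (ρ + σ) = Tword E M1 f ρ + Tword E M1 f σ := by
  induction f generalizing ρ σ with
  | nil => rfl
  | cons i f ih => simp only [Tword, List.foldl_cons, Tstep_add] at ih ⊢; exact ih _ _

lemma Tword_smul (f : List (Fin m)) (c : ℂ) (ρ : Matrix (Fin d) (Fin d) ℂ) :
    Tword E M1 f (c • ρ) = c • Tword E M1 f ρ := by
  induction f generalizing ρ with
  | nil => rfl
  | cons i f ih => simp only [Tword, List.foldl_cons, Tstep_smul] at ih ⊢; exact ih _

lemma Tword_posSemidef (f : List (Fin m)) {ρ : Matrix (Fin d) (Fin d) ℂ} (hρ : ρ.PosSemidef) :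
    (Tword E M1 f ρ).PosSemidef := by
  induction f generalizing ρ with
  | nil => exact hρ
  | cons i f ih => exact ih (Tstep_posSemidef E M1 i hρ)

def tWordₗ (f : List (Fin m)) : Matrix (Fin d) (Fin d) ℂ →ₗ[ℝ] ℝ where
  toFun := tWord E M0 M1 f
  map_add' ρ σ := by
    simp only [tWord, Tword_add, Matrix.mul_add, Matrix.add_mul, trace_add, Complex.add_re,
      Finset.sum_add_distrib]
  map_smul' c ρ := by
    simp only [tWord, ← algebraMap_smul ℂ c ρ, Tword_smul, Matrix.mul_smul, Matrix.smul_mul,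
      trace_smul, smul_eq_mul, Complex.coe_algebraMap, Complex.re_ofReal_mul, Finset.mul_sum,
      RingHom.id_apply]

lemma tWord_nonneg (f : List (Fin m)) {ρ : Matrix (Fin d) (Fin d) ℂ} (hρ : ρ.PosSemidef) :
    0 ≤ tWord E M0 M1 f ρ :=
  Finset.sum_nonneg fun _ _ => (Complex.nonneg_iff.mp
    ((Tword_posSemidef E M1 _ hρ).mul_mul_conjTranspose_same M0).trace_nonneg).1

end Kraus

theorem PDword_subspace_general (d m r : ℕ)
    (E : Fin m → Fin r → Matrix (Fin d) (Fin d) ℂ)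
    (M0 M1 : Matrix (Fin d) (Fin d) ℂ)
    (f : List (Fin m)) :
    (0 : Fin d → ℂ) ∈ PDword E M0 M1 f ∧
    (∀ x ∈ PDword E M0 M1 f, ∀ y ∈ PDword E M0 M1 f, x + y ∈ PDword E M0 M1 f) ∧
    (∀ (c : ℂ), ∀ x ∈ PDword E M0 M1 f, c • x ∈ PDword E M0 M1 f) := by
  let S := rankOneNullSubmodule (tWordₗ E M0 M1 f)
    fun x => tWord_nonneg E M0 M1 f (posSemidef_vecMulVec_self_star x)
  exact ⟨S.zero_mem, fun x hx y hy => S.add_mem hx hy, fun c x hx => S.smul_mem c hx⟩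

/-- `PD_f` is a linear subspace of `ℂ^d`. -/
theorem PDword_subspace (d m r : ℕ) (hd : 0 < d) (hm : 0 < m)
    (E : Fin m → Fin r → Matrix (Fin d) (Fin d) ℂ)
    (hE : ∀ i, ∑ j, (E i j)ᴴ * E i j = 1)
    (M0 M1 : Matrix (Fin d) (Fin d) ℂ)
    (hM : M0ᴴ * M0 + M1ᴴ * M1 = 1)
    (f : List (Fin m)) :
    (0 : Fin d → ℂ) ∈ PDword E M0 M1 f ∧
    (∀ x ∈ PDword E M0 M1 f, ∀ y ∈ PDword E M0 M1 f, x + y ∈ PDword E M0 M1 f) ∧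
    (∀ (c : ℂ), ∀ x ∈ PDword E M0 M1 f, c • x ∈ PDword E M0 M1 f) :=
  PDword_subspace_general d m r E M0 M1 f
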